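/- arXiv:1601.07413 — 2 statements merged into one kernel-verified Lean document; each statement's English description precedes it below -/
import Mathlib

section
/- Let V be a finite-dimensional ℚ-vector space and v ∈ V ⊗_ℚ ℝ. Write v = Σᵢ aᵢ ⊗ eᵢ for a ℚ-basis (eᵢ) of V with real coefficients aᵢ. Then the dimension of the smallest ℚ-subspace W with v ∈ W ⊗_ℚ ℝ equals the dimension over ℚ of the ℚ-span of the coefficients a₁, …, aₙ in ℝ. -/
open scoped TensorProduct

/-!
Choose a ℚ-basis `b₁, …, b_m` of `span_ℚ {aᵢ}` and write `aᵢ = Σⱼ cᵢⱼ bⱼ`; then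
`v = Σⱼ bⱼ ⊗ wⱼ` with `wⱼ = Σᵢ cᵢⱼ eᵢ`. Contracting `v` against a ℚ-linear functional
`ℝ → ℚ` dual to `bⱼ` maps every `W ⊗ ℝ` into `W` and sends `v` to `wⱼ`, so the smallest `W`
is `span_ℚ {wⱼ}`. The `wⱼ` are independent because the columns of `c` are: its rows, the
coordinate vectors of the `aᵢ`, span `ℚ^m`.
-/

open Submodule TensorProduct

theorem Submodule.lift_lsmul_comp_mem_of_mem_baseChange {R A M : Type*} [CommSemiring R]
    [Semiring A] [Algebra R A] [AddCommMonoid M] [Module R M] {p : Submodule R M}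
    (f : A →ₗ[R] R) {x : A ⊗[R] M} (hx : x ∈ p.baseChange A) :
    lift (LinearMap.lsmul R M ∘ₗ f) x ∈ p := by
  obtain ⟨y, rfl⟩ := hx
  induction y using TensorProduct.induction_on with
  | zero => simp
  | tmul r m => simpa using p.smul_mem (f r) m.2
  | add y z hy hz => simpa using p.add_mem hy hz

theorem LinearIndependent.exists_linearMap_apply_eq_single {K V ι : Type*} [Field K]
    [AddCommGroup V] [Module K V] [DecidableEq ι] {b : ι → V} (hb : LinearIndependent K b)
    (j : ι) : ∃ f : V →ₗ[K] K, ∀ k, f (b k) = (Pi.single j 1 : ι → K) k := by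
  obtain ⟨f, hf⟩ := LinearMap.exists_extend ((Module.Basis.span hb).coord j)
  refine ⟨f, fun k => ?_⟩
  have := LinearMap.congr_fun hf (Module.Basis.span hb k)
  rw [LinearMap.comp_apply, Module.Basis.coord_apply, Module.Basis.repr_self,
    Module.Basis.span_apply] at this
  simpa [Finsupp.single_apply, Pi.single_apply, eq_comm] using this

theorem sInf_baseChange_eq_span_of_linearIndependent {K A V ι : Type*} [Field K] [Ring A]
    [Algebra K A] [AddCommGroup V] [Module K V] [Fintype ι] {b : ι → A}
    (hb : LinearIndependent K b) (w : ι → V) :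
    sInf {W : Submodule K V | ∑ j, b j ⊗ₜ[K] w j ∈ W.baseChange A} = span K (Set.range w) := by
  classical
  refine le_antisymm (sInf_le ?_) (le_sInf fun W hW => span_le.2 ?_)
  · exact sum_mem fun j _ => tmul_mem_baseChange_of_mem _ (subset_span (Set.mem_range_self j))
  · rintro _ ⟨j, rfl⟩
    obtain ⟨f, hf⟩ := hb.exists_linearMap_apply_eq_single j
    simpa [hf, Pi.single_apply] using lift_lsmul_comp_mem_of_mem_baseChange f hW

theorem Module.Basis.linearIndependent_coord_comp {K U ι κ : Type*} [Field K] [AddCommGroup U]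
    [Module K U] [Finite ι] (b : Module.Basis ι K U) {a : κ → U}
    (ha : span K (Set.range a) = ⊤) : LinearIndependent K fun j => b.coord j ∘ a := by
  rw [← span_flip_eq_top_iff_linearIndependent]
  have : flip (fun j => b.coord j ∘ a) = b.equivFun ∘ a := by ext; simp [flip]
  rw [this, Set.range_comp, ← LinearEquiv.coe_toLinearMap, ← Submodule.map_span, ha,
    Submodule.map_top, LinearEquiv.range]

theorem Module.Basis.sum_map_tmul_eq {R U A V ι κ : Type*} [CommSemiring R] [AddCommMonoid U]
    [Module R U] [AddCommMonoid A] [Module R A] [AddCommMonoid V] [Module R V] [Fintype ι]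
    [Fintype κ] (b : Module.Basis ι R U) (f : U →ₗ[R] A) (a : κ → U) (e : κ → V) :
    ∑ k, f (a k) ⊗ₜ[R] e k = ∑ j, f (b j) ⊗ₜ[R] ∑ k, b.coord j (a k) • e k := by
  calc ∑ k, f (a k) ⊗ₜ[R] e k = ∑ k, f (∑ j, b.coord j (a k) • b j) ⊗ₜ[R] e k := by
        simp only [Module.Basis.coord_apply, b.sum_repr]
    _ = _ := by
      simp only [map_sum, map_smul, sum_tmul, tmul_sum, smul_tmul]
      exact Finset.sum_comm

theorem stmt_8_general (V : Type*) [AddCommGroup V] [Module ℚ V]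
    (n : ℕ) (e : Module.Basis (Fin n) ℚ V)
    (a : Fin n → ℝ) (v : ℝ ⊗[ℚ] V)
    (hv : v = ∑ i : Fin n, a i ⊗ₜ[ℚ] e i) :
    Module.finrank ℚ
        ↥(sInf {W : Submodule ℚ V | v ∈ W.baseChange ℝ})
      = Module.finrank ℚ ↥(Submodule.span ℚ (Set.range a)) := by
  set U := span ℚ (Set.range a)
  have : FiniteDimensional ℚ U := .span_of_finite ℚ (Set.finite_range a)
  let b := Module.finBasis ℚ U
  let a' : Fin n → U := fun i => ⟨a i, subset_span (Set.mem_range_self i)⟩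
  have ha' : span ℚ (Set.range a') = ⊤ := by
    convert span_span_coe_preimage (R := ℚ) (s := Set.range a)
    ext ⟨x, hx⟩
    simp [a']
  let w : Fin (Module.finrank ℚ U) → V := e.equivFun.symm ∘ fun j => b.coord j ∘ a'
  have hw : LinearIndependent ℚ w :=
    (b.linearIndependent_coord_comp ha').map' _ e.equivFun.symm.ker
  have hvw : v = ∑ j, (U.subtype ∘ b) j ⊗ₜ[ℚ] w j := by
    simp only [hv, w, Module.Basis.equivFun_symm_apply, Function.comp_apply]
    exact b.sum_map_tmul_eq U.subtype a' e
  have hmin := sInf_baseChange_eq_span_of_linearIndependent (A := ℝ)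
    (b.linearIndependent.map' _ U.ker_subtype) w
  rw [← hvw] at hmin
  rw [hmin, finrank_span_eq_card hw, Fintype.card_fin]

/-- If `v = Σ aᵢ ⊗ eᵢ` in `V ⊗_ℚ ℝ` (realized as `ℝ ⊗[ℚ] V`) for a ℚ-basis
`(eᵢ)` of `V`, then the dimension of the smallest ℚ-subspace `W` with
`v ∈ W ⊗_ℚ ℝ` equals `dim_ℚ span_ℚ{a₁,…,aₙ} ⊆ ℝ`. -/
theorem stmt_8 (V : Type*) [AddCommGroup V] [Module ℚ V]
    [FiniteDimensional ℚ V] (n : ℕ) (e : Module.Basis (Fin n) ℚ V)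
    (a : Fin n → ℝ) (v : ℝ ⊗[ℚ] V)
    (hv : v = ∑ i : Fin n, a i ⊗ₜ[ℚ] e i) :
    Module.finrank ℚ
        ↥(sInf {W : Submodule ℚ V | v ∈ W.baseChange ℝ})
      = Module.finrank ℚ ↥(Submodule.span ℚ (Set.range a)) :=
  stmt_8_general V n e a v hv
end

section
/- For every integer n ≥ 1 and every k with 1 ≤ k ≤ n, and every v ∈ ℝⁿ, and every ε > 0, there exists v' ∈ ℝⁿ with ‖v − v'‖ < ε such that the ℚ-span of the coordinates of v' has dimension exactly k over ℚ. -/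
/-!
Fix `x` transcendental over `ℚ`. Vectors `w` with no zero coordinate whose `i`-th coordinate
differs from `x ^ (i % k)` by a rational number are dense. For such `w` the first coordinate is a
nonzero rational, so `1` lies in the `ℚ`-span of the coordinates, and that span is therefore
`span {1, x, …, x ^ (k - 1)}`, which has dimension `k` because `x` is transcendental.
-/

open Set Submodule Module Polynomial

section Span

variable {R M ι : Type*} [Ring R] [AddCommGroup M] [Module R M]

theorem Submodule.span_range_le_of_forall_sub_mem {u w : ι → M} {p : Submodule R M}
    (hp : p ≤ span R (range u)) (h : ∀ i, w i - u i ∈ p) :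
    span R (range w) ≤ span R (range u) := by
  refine span_le.mpr ?_
  rintro _ ⟨i, rfl⟩
  rw [← sub_add_cancel (w i) (u i)]
  exact add_mem (hp (h i)) (subset_span ⟨i, rfl⟩)

theorem Submodule.span_range_eq_of_forall_sub_mem {u w : ι → M} {p : Submodule R M}
    (hu : p ≤ span R (range u)) (hw : p ≤ span R (range w)) (h : ∀ i, w i - u i ∈ p) :
    span R (range w) = span R (range u) :=
  (span_range_le_of_forall_sub_mem hu h).antisymm <|
    span_range_le_of_forall_sub_mem hw fun i => by simpa using neg_mem (h i)

end Span

theorem Submodule.one_le_span_range_of_mem_one {K A ι : Type*} [Field K] [Ring A] [Algebra K A]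
    {w : ι → A} {i : ι} (hi : w i ∈ (1 : Submodule K A)) (hi0 : w i ≠ 0) :
    1 ≤ span K (range w) := by
  obtain ⟨c, hc⟩ := mem_one.mp hi
  have hc0 : c ≠ 0 := by rintro rfl; simp [← hc] at hi0
  rw [one_le, ← inv_smul_smul₀ hc0 (1 : A), ← Algebra.algebraMap_eq_smul_one, hc]
  exact smul_mem _ _ (subset_span ⟨i, rfl⟩)

theorem Transcendental.linearIndependent_pow {R A : Type*} [CommRing R] [Ring A] [Algebra R A]
    {x : A} (hx : Transcendental R x) : LinearIndependent R fun n : ℕ => x ^ n := by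
  simpa [Function.comp_def] using (basisMonomials R).linearIndependent.map'
    (Polynomial.aeval x).toLinearMap (LinearMap.ker_eq_bot.mpr (transcendental_iff_injective.mp hx))

theorem Transcendental.finrank_span_range_pow {K A : Type*} [Field K] [Ring A] [Algebra K A]
    {x : A} (hx : Transcendental K x) (k : ℕ) :
    finrank K (span K (range fun j : Fin k => x ^ (j : ℕ))) = k :=
  (finrank_span_eq_card (hx.linearIndependent_pow.comp _ Fin.val_injective)).trans
    (Fintype.card_fin k)

theorem range_pow_mod {M : Type*} [Monoid M] (x : M) {k n : ℕ} (hk : 0 < k) (hkn : k ≤ n) :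
    range (fun i : Fin n => x ^ ((i : ℕ) % k)) = range fun j : Fin k => x ^ (j : ℕ) := by
  ext y
  constructor
  · rintro ⟨i, rfl⟩
    exact ⟨⟨i % k, Nat.mod_lt _ hk⟩, rfl⟩
  · rintro ⟨j, rfl⟩
    exact ⟨⟨j, j.2.trans_le hkn⟩, by simp [Nat.mod_eq_of_lt j.2]⟩

theorem finrank_span_range_eq_of_sub_pow_mod_mem_one {K A : Type*} [Field K] [Ring A]
    [Algebra K A] {x : A} (hx : Transcendental K x) {k n : ℕ} (hk : 0 < k) (hkn : k ≤ n)
    {w : Fin n → A} (hw : ∀ i, w i - x ^ ((i : ℕ) % k) ∈ (1 : Submodule K A))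
    (hw0 : w ⟨0, hk.trans_le hkn⟩ ≠ 0) :
    finrank K (span K (range w)) = k := by
  have hw0_mem : w ⟨0, hk.trans_le hkn⟩ ∈ (1 : Submodule K A) := by
    simpa using add_mem (hw ⟨0, hk.trans_le hkn⟩) (one_le.mp le_rfl)
  have hu : (1 : Submodule K A) ≤ span K (range fun i : Fin n => x ^ ((i : ℕ) % k)) :=
    one_le.mpr (subset_span ⟨⟨0, hk.trans_le hkn⟩, by simp⟩)
  rw [span_range_eq_of_forall_sub_mem hu (one_le_span_range_of_mem_one hw0_mem hw0) hw,
    range_pow_mod x hk hkn, hx.finrank_span_range_pow]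

theorem transcendental_rat_liouvilleNumber {m : ℕ} (hm : 2 ≤ m) :
    Transcendental ℚ (liouvilleNumber m) :=
  (IsFractionRing.isAlgebraic_iff ℤ ℚ ℝ).not.mp (transcendental_liouvilleNumber hm)

theorem dense_setOf_forall_sub_mem_one_and_ne_zero {ι : Type*} (u : ι → ℝ) :
    Dense {w : ι → ℝ | ∀ i, w i - u i ∈ (1 : Submodule ℚ ℝ) ∧ w i ≠ 0} := by
  have hdense (i : ι) : Dense ((· - u i) ⁻¹' range ((↑) : ℚ → ℝ) \ {0}) :=
    (Rat.denseRange_cast.preimage (Homeomorph.subRight (u i)).isOpenMap).sdiff_singleton 0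
  convert dense_pi univ fun i _ => hdense i using 1
  ext w
  simp [Submodule.mem_one, eq_comm]

theorem dense_setOf_finrank_span_range_eq {k n : ℕ} (hk : 0 < k) (hkn : k ≤ n) :
    Dense {v : EuclideanSpace ℝ (Fin n) |
      finrank ℚ (span ℚ (range fun i => v i)) = k} := by
  obtain ⟨x, hx⟩ : ∃ x : ℝ, Transcendental ℚ x :=
    ⟨_, transcendental_rat_liouvilleNumber le_rfl⟩
  refine ((dense_setOf_forall_sub_mem_one_and_ne_zero fun i : Fin n => x ^ ((i : ℕ) % k)).preimage
    (EuclideanSpace.equiv (Fin n) ℝ).toHomeomorph.isOpenMap).mono ?_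
  intro v hv
  exact finrank_span_range_eq_of_sub_pow_mod_mem_one hx hk hkn (fun i => (hv i).1) (hv _).2

theorem stmt_9_general (n : ℕ) (k : ℕ) (hk1 : 1 ≤ k) (hkn : k ≤ n)
    (v : EuclideanSpace ℝ (Fin n)) (ε : ℝ) (hε : 0 < ε) :
    ∃ v' : EuclideanSpace ℝ (Fin n), ‖v - v'‖ < ε ∧
      Module.finrank ℚ ↥(Submodule.span ℚ (Set.range fun i => v' i)) = k := by
  obtain ⟨v', hv', hdist⟩ := (dense_setOf_finrank_span_range_eq hk1 hkn).exists_dist_lt v hε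
  exact ⟨v', by rwa [← dist_eq_norm], hv'⟩

/-- Vectors whose coordinates have ℚ-rank exactly `k` are dense in ℝⁿ,
for any `1 ≤ k ≤ n`. -/
theorem stmt_9 (n : ℕ) (hn : 1 ≤ n) (k : ℕ) (hk1 : 1 ≤ k) (hkn : k ≤ n)
    (v : EuclideanSpace ℝ (Fin n)) (ε : ℝ) (hε : 0 < ε) :
    ∃ v' : EuclideanSpace ℝ (Fin n), ‖v - v'‖ < ε ∧
      Module.finrank ℚ ↥(Submodule.span ℚ (Set.range fun i => v' i)) = k :=
  stmt_9_general n k hk1 hkn v ε hε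
end
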